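/- Let σ be a pointed full-dimensional rational polyhedral cone in N_ℚ, ρ an extremal ray of σ generated by a primitive lattice vector, and τ the facet of σ^∨ dual to ρ. Then the set S_ρ = {e ∈ M : e ∉ σ^∨ and m + e ∈ σ^∨ ∩ M for all m ∈ (σ^∨ ∩ M) \ (τ ∩ M)} is nonempty, and moreover if e ∈ S_ρ and m ∈ τ ∩ M, then e + m ∈ S_ρ. -/

import Mathlib

open scoped BigOperators Pointwise

noncomputable section

/-- Rational `n`-space `N_ℚ ≅ M_ℚ ≅ ℚⁿ`. -/
abbrev Vec (n : ℕ) := Fin n → ℚ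

/-- The natural pairing `M_ℚ × N_ℚ → ℚ`. -/
def pairQ {n : ℕ} (m p : Vec n) : ℚ := ∑ i, m i * p i

/-- The dual cone of a subset of `N_ℚ`. -/
def dualCone {n : ℕ} (σ : Set (Vec n)) : Set (Vec n) :=
  {m | ∀ p ∈ σ, 0 ≤ pairQ m p}

/-- Inclusion of the lattice `M = ℤⁿ` into `M_ℚ`. -/
def toQ {n : ℕ} (v : Fin n → ℤ) : Vec n := fun i => (v i : ℚ)

/-- A vector of `ℚⁿ` is a lattice vector if all its coordinates are integers. -/
def IsLatticeVec {n : ℕ} (v : Vec n) : Prop := ∀ i, ∃ z : ℤ, v i = (z : ℚ)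

/-- The convex cone generated by a set: all finite nonnegative rational combinations. -/
def coneHull {n : ℕ} (S : Set (Vec n)) : Set (Vec n) :=
  {x | ∃ (G : Finset (Vec n)) (c : Vec n → ℚ), ↑G ⊆ S ∧ (∀ g, 0 ≤ c g) ∧
    x = ∑ g ∈ G, c g • g}

/-- A rational polyhedral cone: the cone generated by finitely many lattice vectors. -/
def IsRatPolyCone {n : ℕ} (σ : Set (Vec n)) : Prop :=
  ∃ G : Finset (Vec n), (∀ g ∈ G, IsLatticeVec g) ∧ σ = coneHull ↑G

/-- A cone is pointed if it contains no line through the origin. -/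
def PointedCone' {n : ℕ} (σ : Set (Vec n)) : Prop := σ ∩ (-σ) ⊆ {0}

/-- A cone is of full dimension if it spans the ambient space. -/
def FullDim {n : ℕ} (σ : Set (Vec n)) : Prop := Submodule.span ℚ σ = ⊤

/-- `ρ` is the extremal ray of `σ` generated by the primitive lattice vector `ν`. -/
def IsExtremalRay {n : ℕ} (σ ρ : Set (Vec n)) (ν : Vec n) : Prop :=
  IsLatticeVec ν ∧ ν ≠ 0 ∧ (∀ c : ℚ, 0 < c → IsLatticeVec (c • ν) → 1 ≤ c) ∧
  ρ = {x | ∃ c : ℚ, 0 ≤ c ∧ x = c • ν} ∧ ρ ⊆ σ ∧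
  (∀ x ∈ σ, ∀ y ∈ σ, x + y ∈ ρ → x ∈ ρ)

/-- The submonoid `σ^∨ ∩ M` of lattice points of the dual cone. -/
def latticeCone {n : ℕ} (σ : Set (Vec n)) : AddSubmonoid (Fin n → ℤ) where
  carrier := {m | toQ m ∈ dualCone σ}
  zero_mem' := by
    intro p hp
    simp [pairQ, toQ]
  add_mem' := by
    intro a b ha hb p hp
    have h : pairQ (toQ (a + b)) p = pairQ (toQ a) p + pairQ (toQ b) p := by
      simp [pairQ, toQ, add_mul, Finset.sum_add_distrib]
    rw [h]
    exact add_nonneg (ha p hp) (hb p hp)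

/-- A derivation is locally nilpotent if every element is annihilated by some iterate. -/
def IsLND {R A : Type*} [CommRing R] [CommRing A] [Algebra R A]
    (D : Derivation R A A) : Prop :=
  ∀ a : A, ∃ k : ℕ, (⇑D)^[k] a = 0

/-!
Write `σ` as the cone over a finite set `G`. Farkas' lemma and the extremality of `ρ` give, for
each generator `g ∉ ρ`, a point of the facet `τ = σ^∨ ∩ ν^⊥` that is positive on `g`; summing
them and clearing denominators gives `w ∈ τ ∩ M` positive on every generator off `ρ`. As `ν` is
primitive, some `u ∈ M` has `⟨u, ν⟩ = 1`, and for `k` large `e = k w - u` pairs to `-1` with `ν`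
and nonnegatively with `G \ ρ`; since a lattice point of `σ^∨ \ τ` pairs to at least `1` with
`ν`, this `e` lies in `S_ρ`.

Conversely, every `e ∈ S_ρ` has `⟨e, ν⟩ < 0`: otherwise `m₀ + k e ∈ σ^∨` for all `k`, where
`m₀ ∈ σ^∨ ∩ M` is positive on `ν` (it exists as `σ^∨` is full-dimensional), forcing `e ∈ σ^∨`.
Hence `e + m ∉ σ^∨` for `m ∈ τ ∩ M`, and `m' + (e + m) = (m' + m) + e` does the rest.
-/

namespace Module.Dual

variable {𝕜 V : Type*} [Field 𝕜] [AddCommGroup V] [Module 𝕜 V]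

def projAlong (φ : Module.Dual 𝕜 V) (v : V) : V →ₗ[𝕜] V :=
  LinearMap.id - (φ v)⁻¹ • φ.smulRight v

lemma projAlong_apply (φ : Module.Dual 𝕜 V) (v u : V) :
    φ.projAlong v u = u - (φ u / φ v) • v := by
  simp [projAlong, div_eq_inv_mul, mul_smul]

lemma projAlong_self {φ : Module.Dual 𝕜 V} {v : V} (hv : φ v ≠ 0) : φ.projAlong v v = 0 := by
  rw [projAlong_apply, div_self hv, one_smul, sub_self]

end Module.Dual

namespace PointedCone

variable {𝕜 V : Type*} [Field 𝕜] [LinearOrder 𝕜] [IsStrictOrderedRing 𝕜]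
  [AddCommGroup V] [Module 𝕜 V]

lemma dual_nonneg_of_mem_hull {s : Set V} {φ : Module.Dual 𝕜 V} (hs : ∀ v ∈ s, 0 ≤ φ v)
    {x : V} (hx : x ∈ hull 𝕜 s) : 0 ≤ φ x :=
  (Submodule.span_le (p := (positive 𝕜 𝕜).comap φ)).mpr hs hx

lemma projAlong_notMem_hull_image {s : Set V} {v w : V} {φ : Module.Dual 𝕜 V}
    (hw : w ∉ hull 𝕜 (insert v s)) (hs : ∀ u ∈ s, 0 ≤ φ u) (hv : φ v < 0) (hwφ : φ w < 0) :
    φ.projAlong v w ∉ hull 𝕜 (φ.projAlong v '' s) := by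
  intro hmem
  obtain ⟨z, hz, hzw⟩ := (Submodule.span_image ((φ.projAlong v).restrictScalars _)).le hmem
  have hφz := dual_nonneg_of_mem_hull hs hz
  have hc : 0 ≤ (φ w - φ z) / φ v := div_nonneg_of_nonpos (by linarith) hv.le
  refine hw (Submodule.mem_span_insert.mpr ⟨⟨_, hc⟩, z, hz, ?_⟩)
  have hzw : z - (φ z / φ v) • v = w - (φ w / φ v) • v := by
    simpa only [LinearMap.coe_restrictScalars, Module.Dual.projAlong_apply] using hzw
  rw [Nonneg.mk_smul, sub_div, sub_smul]
  linear_combination (norm := module) -hzw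

theorem exists_dual_nonneg_and_neg_of_notMem_hull (s : Finset V) {w : V}
    (hw : w ∉ hull 𝕜 (s : Set V)) :
    ∃ φ : Module.Dual 𝕜 V, (∀ v ∈ s, 0 ≤ φ v) ∧ φ w < 0 := by
  classical
  induction hk : s.card using Nat.strong_induction_on generalizing s w with
  | _ k ih =>
    rcases s.eq_empty_or_nonempty with rfl | ⟨v, hvs⟩
    · have hw0 : w ≠ 0 := by rintro rfl; exact hw (zero_mem _)
      obtain ⟨φ, hφ⟩ := Module.Projective.exists_dual_eq_one 𝕜 hw0
      exact ⟨-φ, by simp, by simp [hφ]⟩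
    have hcard : (s.erase v).card < k := hk ▸ Finset.card_erase_lt_of_mem hvs
    have hs : s = insert v (s.erase v) := (Finset.insert_erase hvs).symm
    obtain ⟨φ, hφ, hφw⟩ := ih _ hcard (s.erase v)
      (fun h => hw (Submodule.span_mono (Finset.coe_subset.mpr (s.erase_subset v)) h)) rfl
    by_cases hφv : 0 ≤ φ v
    · refine ⟨φ, fun u hu => ?_, hφw⟩
      rcases eq_or_ne u v with rfl | huv
      · exact hφv
      · exact hφ u (Finset.mem_erase.mpr ⟨huv, hu⟩)
    rw [not_le] at hφv
    -- Fourier–Motzkin: eliminate `v` by projecting onto `ker φ` along `v`, then pull back.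
    set f := φ.projAlong v
    have hfw : f w ∉ hull 𝕜 ((s.erase v).image f : Set V) := by
      rw [Finset.coe_image]
      refine projAlong_notMem_hull_image ?_ hφ hφv hφw
      rwa [← Finset.coe_insert, ← hs]
    obtain ⟨ψ, hψ, hψw⟩ := ih _ (Finset.card_image_le.trans_lt hcard) _ hfw rfl
    refine ⟨ψ ∘ₗ f, fun u hu => ?_, hψw⟩
    rcases eq_or_ne u v with rfl | huv
    · simp [f, Module.Dual.projAlong_self hφv.ne]
    · exact hψ _ (Finset.mem_image_of_mem f (Finset.mem_erase.mpr ⟨huv, hu⟩))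

end PointedCone

open PointedCone

section Toric

variable {n : ℕ}

lemma mem_dualCone {σ : Set (Vec n)} {m : Vec n} : m ∈ dualCone σ ↔ ∀ p ∈ σ, 0 ≤ m ⬝ᵥ p :=
  Iff.rfl

lemma add_mem_dualCone {σ : Set (Vec n)} {x y : Vec n} (hx : x ∈ dualCone σ)
    (hy : y ∈ dualCone σ) : x + y ∈ dualCone σ := mem_dualCone.mpr fun p hp => by
  rw [add_dotProduct]
  exact add_nonneg (hx p hp) (hy p hp)

lemma coneHull_eq_hull (S : Set (Vec n)) : coneHull S = (hull ℚ S : Set (Vec n)) := by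
  ext x
  constructor
  · rintro ⟨G, c, hGS, hc, rfl⟩
    exact Submodule.sum_mem _ fun g hg =>
      Nonneg.mk_smul (c g) (hc g) g ▸ Submodule.smul_mem _ _ (subset_hull (hGS hg))
  · intro hx
    obtain ⟨c, hcS, hc, rfl⟩ := mem_hull_set.mp hx
    exact ⟨c.support, c, hcS, hc, rfl⟩

lemma mem_dualCone_hull {s : Set (Vec n)} {m : Vec n} :
    m ∈ dualCone (hull ℚ s : Set (Vec n)) ↔ ∀ g ∈ s, 0 ≤ m ⬝ᵥ g := by
  refine ⟨fun h g hg => h g (subset_hull hg), fun h => mem_dualCone.mpr fun p hp => ?_⟩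
  simpa using dual_nonneg_of_mem_hull (φ := dotProductEquiv ℚ (Fin n) m) (by simpa using h) hp

lemma toQ_add (a b : Fin n → ℤ) : toQ (a + b) = toQ a + toQ b := by
  funext i; simp [toQ]

lemma toQ_sub (a b : Fin n → ℤ) : toQ (a - b) = toQ a - toQ b := by
  funext i; simp [toQ]

lemma toQ_nsmul (k : ℕ) (a : Fin n → ℤ) : toQ (k • a) = (k : ℚ) • toQ a := by
  funext i; simp [toQ]

lemma toQ_dotProduct (a b : Fin n → ℤ) : toQ a ⬝ᵥ toQ b = ((a ⬝ᵥ b : ℤ) : ℚ) :=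
  (RingHom.map_dotProduct (Int.castRingHom ℚ) a b).symm

lemma isLatticeVec_iff {v : Vec n} : IsLatticeVec v ↔ ∃ z : Fin n → ℤ, toQ z = v :=
  ⟨fun h => ⟨fun i => (h i).choose, funext fun i => (h i).choose_spec.symm⟩,
    fun ⟨z, hz⟩ i => ⟨z i, by rw [← hz]; rfl⟩⟩

lemma exists_pos_smul_isLatticeVec (x : Vec n) :
    ∃ N : ℕ, 0 < N ∧ IsLatticeVec ((N : ℚ) • x) := by
  refine ⟨∏ i, (x i).den, Finset.prod_pos fun i _ => (x i).den_pos, fun i => ?_⟩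
  obtain ⟨c, hc⟩ := Finset.dvd_prod_of_mem (fun i => (x i).den) (Finset.mem_univ i)
  refine ⟨c * (x i).num, ?_⟩
  rw [Pi.smul_apply, smul_eq_mul, hc]
  push_cast
  rw [← Rat.mul_den_eq_num]
  ring

lemma IsLatticeVec.one_le_dotProduct {ν : Vec n} (hν : IsLatticeVec ν) {m : Fin n → ℤ}
    (h : 0 < toQ m ⬝ᵥ ν) : 1 ≤ toQ m ⬝ᵥ ν := by
  obtain ⟨z, rfl⟩ := isLatticeVec_iff.mp hν
  rw [toQ_dotProduct] at h ⊢
  exact_mod_cast Int.cast_pos.mp h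

lemma exists_dotProduct_eq_one {ν : Vec n} (hν : IsLatticeVec ν)
    (hprim : ∀ c : ℚ, 0 < c → IsLatticeVec (c • ν) → 1 ≤ c) :
    ∃ u : Fin n → ℤ, toQ u ⬝ᵥ ν = 1 := by
  obtain ⟨z, rfl⟩ := isLatticeVec_iff.mp hν
  obtain ⟨u, hu⟩ := Finset.univ.gcd_eq_sum_mul z
  set d := Finset.univ.gcd z
  have hdvd : ∀ i, d ∣ z i := fun i => Finset.gcd_dvd (Finset.mem_univ i)
  have hd : 0 < d := by
    refine (Int.nonneg_of_normalize_eq_self (Finset.normalize_gcd)).lt_of_ne' fun hd => ?_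
    have := hprim (1 / 2) (by norm_num) fun i => ⟨0, ?_⟩
    · norm_num at this
    · simp [toQ, Finset.gcd_eq_zero_iff.mp hd i (Finset.mem_univ i)]
  have hd1 : d ≤ 1 := by
    have hlat : IsLatticeVec ((d : ℚ)⁻¹ • toQ z) := fun i => by
      obtain ⟨q, hq⟩ := hdvd i
      exact ⟨q, by simp [toQ, hq, hd.ne']⟩
    have := hprim (d : ℚ)⁻¹ (by positivity) hlat
    exact_mod_cast (one_le_inv₀ (by exact_mod_cast hd)).mp this
  refine ⟨u, ?_⟩
  rw [toQ_dotProduct, dotProduct_comm, dotProduct, ← hu, le_antisymm hd1 hd]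
  rfl

lemma IsExtremalRay.mem {σ ρ : Set (Vec n)} {ν : Vec n} (hρ : IsExtremalRay σ ρ ν) : ν ∈ σ :=
  hρ.2.2.2.2.1 (hρ.2.2.2.1 ▸ ⟨1, zero_le_one, (one_smul ℚ ν).symm⟩)

section Facet

variable {G : Finset (Vec n)} {ρ : Set (Vec n)} {ν : Vec n}

lemma exists_mem_dualCone_dotProduct_eq_zero_and_pos
    (hρ : IsExtremalRay (hull ℚ (G : Set (Vec n))) ρ ν) {g : Vec n}
    (hg : g ∈ hull ℚ (G : Set (Vec n))) (hgρ : g ∉ ρ) :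
    ∃ x ∈ dualCone (hull ℚ (G : Set (Vec n)) : Set (Vec n)), x ⬝ᵥ ν = 0 ∧ 0 < x ⬝ᵥ g := by
  classical
  have hν := hρ.mem
  obtain ⟨-, -, -, rfl, -, hext⟩ := hρ
  have hsep : -g ∉ hull ℚ ((insert ν (insert (-ν) G) : Finset (Vec n)) : Set (Vec n)) := by
    intro h
    simp only [Finset.coe_insert, Submodule.mem_span_insert] at h
    obtain ⟨a, -, ⟨b, y, hy, rfl⟩, hg'⟩ := h
    refine hgρ (hext g hg (y + a • ν) (add_mem hy (Submodule.smul_mem _ a hν)) ⟨b, b.2, ?_⟩)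
    simp only [← Nonneg.coe_smul] at hg' ⊢
    linear_combination (norm := module) -hg'
  obtain ⟨φ, hφ, hφg⟩ := exists_dual_nonneg_and_neg_of_notMem_hull _ hsep
  have hφ_eq (u : Vec n) : (dotProductEquiv ℚ (Fin n)).symm φ ⬝ᵥ u = φ u := by
    rw [← dotProductEquiv_apply_apply, LinearEquiv.apply_symm_apply]
  have hφν := hφ ν (Finset.mem_insert_self _ _)
  have hφν' := hφ (-ν) (Finset.mem_insert_of_mem (Finset.mem_insert_self _ _))
  refine ⟨(dotProductEquiv ℚ (Fin n)).symm φ, mem_dualCone_hull.mpr fun u hu => ?_, ?_, ?_⟩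
  · rw [hφ_eq]
    exact hφ u (Finset.mem_insert_of_mem (Finset.mem_insert_of_mem hu))
  · rw [hφ_eq]
    rw [map_neg] at hφν'
    linarith
  · rw [hφ_eq]
    rw [map_neg] at hφg
    linarith

lemma exists_mem_dualCone_dotProduct_eq_zero_and_forall_pos
    (hρ : IsExtremalRay (hull ℚ (G : Set (Vec n))) ρ ν) (T : Finset (Vec n))
    (hT : ∀ g ∈ T, g ∈ hull ℚ (G : Set (Vec n)) ∧ g ∉ ρ) :
    ∃ x ∈ dualCone (hull ℚ (G : Set (Vec n)) : Set (Vec n)), x ⬝ᵥ ν = 0 ∧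
      ∀ g ∈ T, 0 < x ⬝ᵥ g := by
  classical
  induction T using Finset.induction_on with
  | empty => exact ⟨0, fun p _ => (zero_dotProduct p).ge, zero_dotProduct ν, by simp⟩
  | insert g T hgT ih =>
    obtain ⟨x, hx, hxν, hxT⟩ := ih fun h hh => hT h (Finset.mem_insert_of_mem hh)
    obtain ⟨hg, hgρ⟩ := hT g (Finset.mem_insert_self g T)
    obtain ⟨y, hy, hyν, hyg⟩ := exists_mem_dualCone_dotProduct_eq_zero_and_pos hρ hg hgρ
    refine ⟨x + y, add_mem_dualCone hx hy, by rw [add_dotProduct, hxν, hyν, add_zero],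
      fun h hh => ?_⟩
    rw [add_dotProduct]
    rcases Finset.mem_insert.mp hh with rfl | hh
    · exact add_pos_of_nonneg_of_pos (hx h hg) hyg
    · exact add_pos_of_pos_of_nonneg (hxT h hh) (hy h (hT h (Finset.mem_insert_of_mem hh)).1)

lemma exists_dotProduct_eq_neg_one_and_nonneg
    (hρ : IsExtremalRay (hull ℚ (G : Set (Vec n))) ρ ν) :
    ∃ e : Fin n → ℤ, toQ e ⬝ᵥ ν = -1 ∧ ∀ g ∈ G, g ∉ ρ → 0 ≤ toQ e ⬝ᵥ g := by
  classical
  set T := G.filter (· ∉ ρ)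
  obtain ⟨x, -, hxν, hxT⟩ := exists_mem_dualCone_dotProduct_eq_zero_and_forall_pos hρ T
    fun g hg => ⟨subset_hull (Finset.mem_filter.mp hg).1, (Finset.mem_filter.mp hg).2⟩
  obtain ⟨N, hN, hNx⟩ := exists_pos_smul_isLatticeVec x
  obtain ⟨z, hz⟩ := isLatticeVec_iff.mp hNx
  obtain ⟨u, hu⟩ := exists_dotProduct_eq_one hρ.1 hρ.2.2.1
  have hzT : ∀ g ∈ T, 0 < toQ z ⬝ᵥ g := fun g hg => by
    rw [hz, smul_dotProduct, smul_eq_mul]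
    exact mul_pos (by exact_mod_cast hN) (hxT g hg)
  obtain ⟨M, hM⟩ := ((Filter.eventually_all_finset T).2 fun g hg =>
    (tendsto_natCast_atTop_atTop.atTop_mul_const (hzT g hg)).eventually_ge_atTop
      (toQ u ⬝ᵥ g)).exists
  refine ⟨M • z - u, ?_, fun g hg hgρ => ?_⟩
  · rw [toQ_sub, toQ_nsmul, sub_dotProduct, smul_dotProduct, hz, smul_dotProduct, hxν, hu]
    simp
  · have := hM g (Finset.mem_filter.mpr ⟨hg, hgρ⟩)
    rw [toQ_sub, toQ_nsmul, sub_dotProduct, smul_dotProduct, smul_eq_mul]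
    linarith

end Facet

/-- The set `S_ρ` for the ray `ρ` spanned by `ν`; `toQ m ⬝ᵥ ν ≠ 0` says that `m ∉ τ`. -/
def rootSet (σ : Set (Vec n)) (ν : Vec n) : Set (Fin n → ℤ) :=
  {e | toQ e ∉ dualCone σ ∧ ∀ m : Fin n → ℤ, toQ m ∈ dualCone σ → toQ m ⬝ᵥ ν ≠ 0 →
    toQ (m + e) ∈ dualCone σ}

lemma rootSet_nonempty {G : Finset (Vec n)} {ρ : Set (Vec n)} {ν : Vec n}
    (hρ : IsExtremalRay (hull ℚ (G : Set (Vec n))) ρ ν) :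
    (rootSet (hull ℚ (G : Set (Vec n))) ν).Nonempty := by
  obtain ⟨e, heν, heG⟩ := exists_dotProduct_eq_neg_one_and_nonneg hρ
  have hν := hρ.mem
  refine ⟨e, fun he => ?_, fun m hm hmν => mem_dualCone_hull.mpr fun g hg => ?_⟩
  · have : 0 ≤ toQ e ⬝ᵥ ν := he ν hν
    linarith
  have hm1 : 1 ≤ toQ m ⬝ᵥ ν := hρ.1.one_le_dotProduct ((hm ν hν).lt_of_ne' hmν)
  rw [toQ_add, add_dotProduct]
  by_cases hgρ : g ∈ ρ
  · obtain ⟨c, hc, rfl⟩ : ∃ c : ℚ, 0 ≤ c ∧ g = c • ν := by rw [hρ.2.2.2.1] at hgρ; exact hgρ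
    rw [dotProduct_smul, dotProduct_smul, heν, smul_eq_mul, smul_eq_mul]
    nlinarith
  · exact add_nonneg (hm g (subset_hull hg)) (heG g hg hgρ)

lemma nonneg_of_forall_add_nat_mul_nonneg {K : Type*} [Field K] [LinearOrder K]
    [IsStrictOrderedRing K] [Archimedean K] {a b : K} (h : ∀ k : ℕ, 0 ≤ a + k * b) : 0 ≤ b := by
  by_contra! hb
  obtain ⟨k, hk⟩ := exists_nat_gt (a / -b)
  rw [div_lt_iff₀ (neg_pos.mpr hb)] at hk
  linarith [h k]

section Recession

variable {σ : Set (Vec n)} {ν : Vec n}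

lemma exists_mem_dualCone_dotProduct_pos (hfull : FullDim (dualCone σ)) (hν : ν ∈ σ)
    (hν0 : ν ≠ 0) : ∃ m₀ : Fin n → ℤ, toQ m₀ ∈ dualCone σ ∧ 0 < toQ m₀ ⬝ᵥ ν := by
  obtain ⟨x, hx, hxν⟩ : ∃ x ∈ dualCone σ, x ⬝ᵥ ν ≠ 0 := by
    by_contra! h
    have hle : Submodule.span ℚ (dualCone σ) ≤ LinearMap.ker (dotProductEquiv ℚ (Fin n) ν) :=
      Submodule.span_le.mpr fun x hx => by simpa [dotProduct_comm] using h x hx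
    rw [hfull] at hle
    exact hν0 (dotProduct_self_eq_zero.mp (by simpa using hle (Submodule.mem_top (x := ν))))
  obtain ⟨N, hN, hNx⟩ := exists_pos_smul_isLatticeVec x
  obtain ⟨m₀, hm₀⟩ := isLatticeVec_iff.mp hNx
  have hNpos : (0 : ℚ) < N := by exact_mod_cast hN
  refine ⟨m₀, mem_dualCone.mpr fun p hp => ?_, ?_⟩
  · rw [hm₀, smul_dotProduct]
    exact smul_nonneg hNpos.le (hx p hp)
  · rw [hm₀, smul_dotProduct]
    exact smul_pos hNpos ((hx ν hν).lt_of_ne' hxν)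

lemma dotProduct_neg_of_mem_rootSet (hfull : FullDim (dualCone σ)) (hν : ν ∈ σ) (hν0 : ν ≠ 0)
    {e : Fin n → ℤ} (he : e ∈ rootSet σ ν) : toQ e ⬝ᵥ ν < 0 := by
  obtain ⟨m₀, hm₀, hm₀ν⟩ := exists_mem_dualCone_dotProduct_pos hfull hν hν0
  by_contra! heν
  have hiter : ∀ k : ℕ, toQ (m₀ + k • e) ∈ dualCone σ := by
    intro k
    induction k with
    | zero => simpa using hm₀
    | succ k ih =>
      rw [succ_nsmul, ← add_assoc]
      refine he.2 _ ih (ne_of_gt ?_)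
      rw [toQ_add, toQ_nsmul, add_dotProduct, smul_dotProduct, smul_eq_mul]
      exact add_pos_of_pos_of_nonneg hm₀ν (mul_nonneg k.cast_nonneg heν)
  refine he.1 (mem_dualCone.mpr fun p hp =>
    nonneg_of_forall_add_nat_mul_nonneg (a := toQ m₀ ⬝ᵥ p) fun k => ?_)
  have := mem_dualCone.mp (hiter k) p hp
  rwa [toQ_add, toQ_nsmul, add_dotProduct, smul_dotProduct, smul_eq_mul] at this

lemma add_mem_rootSet (hfull : FullDim (dualCone σ)) (hν : ν ∈ σ) (hν0 : ν ≠ 0)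
    {e m : Fin n → ℤ} (he : e ∈ rootSet σ ν) (hm : toQ m ∈ dualCone σ)
    (hmν : toQ m ⬝ᵥ ν = 0) : e + m ∈ rootSet σ ν := by
  refine ⟨fun h => ?_, fun m' hm' hm'ν => ?_⟩
  · have h' : 0 ≤ toQ (e + m) ⬝ᵥ ν := h ν hν
    rw [toQ_add, add_dotProduct, hmν, add_zero] at h'
    linarith [dotProduct_neg_of_mem_rootSet hfull hν hν0 he]
  · rw [add_comm e m, ← add_assoc]
    refine he.2 (m' + m) ?_ ?_
    · rw [toQ_add]
      exact add_mem_dualCone hm' hm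
    · rwa [toQ_add, add_dotProduct, hmν, add_zero]

end Recession

end Toric

theorem stmt6_general {n : ℕ} (σ ρ : Set (Vec n)) (ν : Vec n)
    (hσ : IsRatPolyCone σ)
    (hfull' : FullDim (dualCone σ))
    (hρ : IsExtremalRay σ ρ ν) :
    (∃ e : Fin n → ℤ,
      toQ e ∉ dualCone σ ∧
      (∀ m : Fin n → ℤ, toQ m ∈ dualCone σ → pairQ (toQ m) ν ≠ 0 →
        toQ (m + e) ∈ dualCone σ)) ∧
    (∀ e m : Fin n → ℤ,
      (toQ e ∉ dualCone σ ∧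
        (∀ m' : Fin n → ℤ, toQ m' ∈ dualCone σ → pairQ (toQ m') ν ≠ 0 →
          toQ (m' + e) ∈ dualCone σ)) →
      toQ m ∈ dualCone σ → pairQ (toQ m) ν = 0 →
      (toQ (e + m) ∉ dualCone σ ∧
        (∀ m' : Fin n → ℤ, toQ m' ∈ dualCone σ → pairQ (toQ m') ν ≠ 0 →
          toQ (m' + (e + m)) ∈ dualCone σ))) := by
  obtain ⟨G, -, rfl⟩ := hσ
  rw [coneHull_eq_hull] at hfull' hρ ⊢
  exact ⟨rootSet_nonempty hρ, fun e m he hm hmν =>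
    add_mem_rootSet hfull' hρ.mem hρ.2.1 he hm hmν⟩

/-- Remark 2.7: for a pointed full-dimensional rational polyhedral cone `σ`, an extremal
ray `ρ` of `σ` with primitive generator `ν`, and dual facet `τ = σ^∨ ∩ ρ^⊥`, the set
`S_ρ = {e ∈ M : e ∉ σ^∨, and m + e ∈ σ^∨ ∩ M for all m ∈ (σ^∨ ∩ M) \ (τ ∩ M)}`
is nonempty, and it is stable under adding lattice points of `τ`. -/
theorem stmt6 {n : ℕ} (σ ρ : Set (Vec n)) (ν : Vec n)
    (hσ : IsRatPolyCone σ) (hpt : PointedCone' σ) (hfull : FullDim σ)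
    (hfull' : FullDim (dualCone σ))
    (hρ : IsExtremalRay σ ρ ν) :
    (∃ e : Fin n → ℤ,
      toQ e ∉ dualCone σ ∧
      (∀ m : Fin n → ℤ, toQ m ∈ dualCone σ → pairQ (toQ m) ν ≠ 0 →
        toQ (m + e) ∈ dualCone σ)) ∧
    (∀ e m : Fin n → ℤ,
      (toQ e ∉ dualCone σ ∧
        (∀ m' : Fin n → ℤ, toQ m' ∈ dualCone σ → pairQ (toQ m') ν ≠ 0 →
          toQ (m' + e) ∈ dualCone σ)) →
      toQ m ∈ dualCone σ → pairQ (toQ m) ν = 0 →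
      (toQ (e + m) ∉ dualCone σ ∧
        (∀ m' : Fin n → ℤ, toQ m' ∈ dualCone σ → pairQ (toQ m') ν ≠ 0 →
          toQ (m' + (e + m)) ∈ dualCone σ))) :=
  stmt6_general σ ρ ν hσ hfull' hρ
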